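/- arXiv:1504.02805 — 3 statements merged into one kernel-verified Lean document; each statement's English description precedes it below -/
import Mathlib

section
/- Let g, h ∈ Q, let Γ be a Turing functional with binary output (a monotone map from strings to binary strings), and let B be a set of strings. Suppose that: τ and τ* are strings; A is a finite prefix-free set of extensions of τ which is 3g-big above τ; for each ρ ∈ A, E_{ρ,0} and E_{ρ,1} are finite sets of extensions of ρ, each 3g-big above ρ, and E_{ρ,0}, E_{ρ,1} Γ-split mod B; and F is a finite set of strings, 3h-big above τ*, such that |Γ(σ)| > |Γ(ν)| for all σ ∈ F ∖ B and all ν ∈ E ∖ B, where E is the union of all the E_{ρ,i} (ρ ∈ A, i < 2). Then there are E' ⊆ E which is g-big above τ, and F' ⊆ F which is h-big above τ*, such that E' and F' Γ-split mod B. -/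
/-! Unless `F ∩ B` is already `h`-big above `τs`, the strings of `F ∖ B` are `(2h+1)`-big, so
there is a longest binary string `p` such that the `σ ∈ F ∖ B` with `p ≼ Γ σ` are still
`(2h+1)`-big, while for neither child `p ++ [b]` this holds. As `E₀ ρ` and `E₁ ρ` split, one of
them has no `Γ`-image (outside `B`) below `p`; its images leave `p` sideways or through one of
the two children, so by pigeonhole one of these three ways is `g`-big above `ρ`, and by
pigeonhole over `A` one way `k` is `g`-big above `τ`. The matching part of `F` (images above `p`
if `k` is sideways, images avoiding `p ++ [b]` if `k` goes through `p ++ [b]`) is `h`-big; no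
`E'`-image is a prefix of an `F'`-image by the choice of the parts, and none conversely since the
`F`-images are longer. -/

/-- Strings: finite sequences of natural numbers. -/
abbrev Str := List ℕ

/-- The set of strings extending some element of `A`  (`A^≼`). -/
def above (A : Set Str) : Set Str := {τ | ∃ σ ∈ A, σ <+: τ}

/-- A set of strings is prefix-free if its elements are pairwise incomparable. -/
def PrefixFree (A : Set Str) : Prop := ∀ σ ∈ A, ∀ τ ∈ A, σ <+: τ → σ = τ

/-- `T` is a tree above `σ`: a nonempty set of extensions of `σ` closed under
initial segments extending `σ`. -/
def IsTreeAbove (σ : Str) (T : Set Str) : Prop :=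
  T.Nonempty ∧ (∀ τ ∈ T, σ <+: τ) ∧ ∀ τ ∈ T, ∀ ρ : Str, σ <+: ρ → ρ <+: τ → ρ ∈ T

/-- `T` is a forest above the prefix-free set `A`: `T ⊆ A^≼` contains `A`, and
for each `σ ∈ A`, `T ∩ σ^≼` is a tree above `σ`. -/
def IsForestAbove (A T : Set Str) : Prop :=
  A ⊆ T ∧ T ⊆ above A ∧ ∀ σ ∈ A, IsTreeAbove σ (T ∩ {τ | σ <+: τ})

/-- `τ` is a leaf (a maximal element) of `T`. -/
def IsLeaf (T : Set Str) (τ : Str) : Prop := τ ∈ T ∧ ∀ ρ ∈ T, τ <+: ρ → ρ = τ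

/-- `T` is `h`-bushy: every non-leaf `τ ∈ T` has at least `h |τ|` immediate
successors on `T`. -/
def Bushy (h : ℕ → ℕ) (T : Set Str) : Prop :=
  ∀ τ ∈ T, ¬ IsLeaf T τ →
    h τ.length ≤ {ρ ∈ T | τ <+: ρ ∧ ρ.length = τ.length + 1}.ncard

/-- `B` is `h`-big above the finite prefix-free set `A`: some finite `h`-bushy
forest above `A` has all of its leaves in `B`. -/
def BigAboveF (h : ℕ → ℕ) (A B : Set Str) : Prop :=
  ∃ T : Set Str, T.Finite ∧ IsForestAbove A T ∧ Bushy h T ∧ ∀ τ : Str, IsLeaf T τ → τ ∈ B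

/-- `B` is `h`-big above an arbitrary set `A` of strings: `B` is `h`-big above
every finite prefix-free subset of `A`. -/
def BigAbove (h : ℕ → ℕ) (A B : Set Str) : Prop :=
  ∀ A' : Set Str, A' ⊆ A → A'.Finite → PrefixFree A' → BigAboveF h A' B

/-- A bounding function: a computable function into `[2, ∞)`. -/
def Bounding (h : ℕ → ℕ) : Prop := Computable h ∧ ∀ n, 2 ≤ h n

/-- The forest `R` is an end-extension of the forest `S`: every string in
`R ∖ S` extends some leaf of `S`. -/
def EndExt (S R : Set Str) : Prop :=
  S ⊆ R ∧ ∀ τ ∈ R, τ ∉ S → ∃ ρ : Str, IsLeaf S ρ ∧ ρ <+: τ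

/-- The class `Q` of nondecreasing computable functions `h : ω → [2, ∞)` with
`h n ≥ 2 ^ n` for all `n`. -/
def MemQ (h : ℕ → ℕ) : Prop :=
  Computable h ∧ Monotone h ∧ (∀ n, 2 ≤ h n) ∧ (∀ n, 2 ^ n ≤ h n)

/-- `A₀` and `A₁` `Γ`-split mod `B`: `Γ τ₀` and `Γ τ₁` are incomparable binary
strings for all `τ₀ ∈ A₀ ∖ B` and `τ₁ ∈ A₁ ∖ B`. -/
def GammaSplit (Γ : Str → List Bool) (B A₀ A₁ : Set Str) : Prop :=
  ∀ τ₀ ∈ A₀, τ₀ ∉ B → ∀ τ₁ ∈ A₁, τ₁ ∉ B →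
    ¬ Γ τ₀ <+: Γ τ₁ ∧ ¬ Γ τ₁ <+: Γ τ₀

lemma IsTreeAbove.mem_root {σ : Str} {T : Set Str} (h : IsTreeAbove σ T) : σ ∈ T := by
  obtain ⟨⟨τ, hτ⟩, hext, hclosed⟩ := h
  exact hclosed τ hτ σ (List.prefix_refl σ) (hext τ hτ)

lemma isForestAbove_singleton_iff {σ : Str} {T : Set Str} :
    IsForestAbove {σ} T ↔ IsTreeAbove σ T := by
  have hcone : (∀ τ ∈ T, σ <+: τ) → T ∩ {τ | σ <+: τ} = T := fun h =>
    Set.inter_eq_left.mpr h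
  constructor
  · rintro ⟨-, hT, htree⟩
    have hext : ∀ τ ∈ T, σ <+: τ := fun τ hτ => by
      obtain ⟨_, rfl, h⟩ := hT hτ
      exact h
    simpa [hcone hext] using htree σ rfl
  · intro htree
    refine ⟨Set.singleton_subset_iff.mpr htree.mem_root, fun τ hτ => ⟨σ, rfl, htree.2.1 τ hτ⟩, ?_⟩
    rintro _ rfl
    rwa [hcone htree.2.1]

lemma ncard_one_step_extensions (T : Set Str) (t : Str) :
    {ρ ∈ T | t <+: ρ ∧ ρ.length = t.length + 1}.ncard = {n | t ++ [n] ∈ T}.ncard := by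
  have : {ρ ∈ T | t <+: ρ ∧ ρ.length = t.length + 1} = (t ++ [·]) '' {n | t ++ [n] ∈ T} := by
    ext ρ
    constructor
    · rintro ⟨hρ, ⟨r, rfl⟩, hlen⟩
      obtain ⟨n, rfl⟩ := List.length_eq_one_iff.mp (by simpa using hlen)
      exact ⟨n, hρ, rfl⟩
    · rintro ⟨n, hn, rfl⟩
      exact ⟨hn, List.prefix_append _ _, by simp⟩
  rw [this, Set.ncard_image_of_injective _ fun a b h => by simpa using h]

lemma bushy_iff {f : ℕ → ℕ} {T : Set Str} :
    Bushy f T ↔ ∀ τ ∈ T, ¬ IsLeaf T τ → f τ.length ≤ {n | τ ++ [n] ∈ T}.ncard := by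
  simp only [Bushy, ncard_one_step_extensions]

/-- `X` is `f`-big above `σ`, inductively: either `σ ∈ X`, or `X` is `f`-big above at least
`f |σ|` immediate successors `σ ++ [n]`. For positive `f` this agrees with `BigAboveF f {σ} X`. -/
inductive IsBigAbove (f : ℕ → ℕ) (X : Set Str) : Str → Prop
  | mem {σ : Str} : σ ∈ X → IsBigAbove f X σ
  | branch {σ : Str} (I : Finset ℕ) :
      f σ.length ≤ I.card → (∀ n ∈ I, IsBigAbove f X (σ ++ [n])) → IsBigAbove f X σ

lemma BigAboveF.isBigAbove {f : ℕ → ℕ} {σ : Str} {X : Set Str} (h : BigAboveF f {σ} X) :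
    IsBigAbove f X σ := by
  obtain ⟨T, hfin, hforest, hbushy, hleaf⟩ := h
  obtain ⟨M, hM⟩ := (hfin.image List.length).bddAbove
  suffices ∀ k, ∀ t ∈ T, M < t.length + k → IsBigAbove f X t from
    this (M + 1) σ (hforest.1 rfl) (by omega)
  intro k
  induction k with
  | zero => exact fun t ht hlt => absurd (hM ⟨t, ht, rfl⟩) (by omega)
  | succ k ih =>
    intro t ht hlt
    by_cases hl : IsLeaf T t
    · exact .mem (hleaf t hl)
    have hchildren : {n | t ++ [n] ∈ T}.Finite :=
      hfin.preimage fun a _ b _ h => by simpa using h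
    refine .branch hchildren.toFinset ?_ fun n hn => ih _ (by simpa using hn)
      (by simp only [List.length_append, List.length_singleton]; omega)
    rw [← Set.ncard_eq_toFinset_card _ hchildren]
    exact bushy_iff.mp hbushy t ht hl

lemma bigAboveF_singleton_of_mem {f : ℕ → ℕ} {σ : Str} {X : Set Str} (hσ : σ ∈ X) :
    BigAboveF f {σ} X := by
  have hleaf : IsLeaf {σ} σ := ⟨rfl, fun ρ hρ _ => hρ⟩
  refine ⟨{σ}, Set.finite_singleton σ, isForestAbove_singleton_iff.mpr ⟨⟨σ, rfl⟩, ?_, ?_⟩,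
    fun τ hτ hnl => absurd (hτ ▸ hleaf) hnl, fun τ hτ => hτ.1 ▸ hσ⟩
  · rintro τ rfl
    exact List.prefix_refl τ
  · rintro τ rfl ρ hτρ hρτ
    exact hρτ.eq_of_length (le_antisymm hρτ.length_le hτρ.length_le)

section Grafting

variable {σ : Str} {I : Set ℕ} {S : ℕ → Set Str}

lemma mem_of_prefix_of_mem_insert_biUnion (hS : ∀ n ∈ I, IsTreeAbove (σ ++ [n]) (S n))
    {n : ℕ} (hn : n ∈ I) {x y : Str} (hx : x ∈ S n) (hy : y ∈ insert σ (⋃ m ∈ I, S m))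
    (hxy : x <+: y) : y ∈ S n := by
  have hny := ((hS n hn).2.1 x hx).trans hxy
  rcases hy with rfl | hy
  · simpa using hny.length_le
  · obtain ⟨m, hm, hy⟩ := Set.mem_iUnion₂.mp hy
    obtain rfl : m = n := by
      simpa using (List.prefix_of_prefix_length_le ((hS m hm).2.1 y hy) hny (by simp)).eq_of_length
        (by simp)
    exact hy

lemma isTreeAbove_insert_biUnion (hS : ∀ n ∈ I, IsTreeAbove (σ ++ [n]) (S n)) :
    IsTreeAbove σ (insert σ (⋃ n ∈ I, S n)) := by
  refine ⟨⟨σ, Set.mem_insert _ _⟩, ?_, ?_⟩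
  · rintro τ (rfl | hτ)
    · exact List.prefix_refl τ
    · obtain ⟨m, hm, hτ⟩ := Set.mem_iUnion₂.mp hτ
      exact (List.prefix_append σ [m]).trans ((hS m hm).2.1 τ hτ)
  · rintro τ (rfl | hτ) ρ hσρ hρτ
    · exact .inl (hρτ.eq_of_length (le_antisymm hρτ.length_le hσρ.length_le))
    obtain ⟨m, hm, hτ⟩ := Set.mem_iUnion₂.mp hτ
    rcases List.prefix_or_prefix_of_prefix hρτ ((hS m hm).2.1 τ hτ) with h | h
    · rcases List.prefix_concat_iff.mp h with rfl | h
      · exact .inr (Set.mem_biUnion hm (hS m hm).mem_root)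
      · exact .inl (h.eq_of_length (le_antisymm h.length_le hσρ.length_le))
    · exact .inr (Set.mem_biUnion hm ((hS m hm).2.2 τ hτ ρ h hρτ))

end Grafting

lemma bigAboveF_of_children {f : ℕ → ℕ} {σ : Str} {X : Set Str} {I : Finset ℕ}
    (hpos : 0 < f σ.length) (hI : f σ.length ≤ I.card)
    (h : ∀ n ∈ I, BigAboveF f {σ ++ [n]} X) : BigAboveF f {σ} X := by
  choose! S hSfin hStree hSbushy hSleaf using h
  simp only [isForestAbove_singleton_iff] at hStree
  set U := insert σ (⋃ n ∈ (I : Set ℕ), S n)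
  have hUfin : U.Finite := (I.finite_toSet.biUnion hSfin).insert σ
  have hSU {n} (hn : n ∈ I) {x} (hx : x ∈ S n) : x ∈ U := .inr (Set.mem_biUnion hn hx)
  have hchildren (τ : Str) : {n | τ ++ [n] ∈ U}.Finite :=
    hUfin.preimage fun a _ b _ h => by simpa using h
  have hleaf {n} (hn : n ∈ I) {x} (hx : x ∈ S n) : IsLeaf U x ↔ IsLeaf (S n) x :=
    ⟨fun h => ⟨hx, fun ρ hρ hxρ => h.2 ρ (hSU hn hρ) hxρ⟩, fun h =>
      ⟨hSU hn hx, fun ρ hρ hxρ =>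
        h.2 ρ (mem_of_prefix_of_mem_insert_biUnion hStree hn hx hρ hxρ) hxρ⟩⟩
  refine ⟨U, hUfin, isForestAbove_singleton_iff.mpr (isTreeAbove_insert_biUnion hStree),
    bushy_iff.mpr ?_, ?_⟩
  · rintro τ (rfl | hτ) hnl
    · calc f τ.length ≤ (I : Set ℕ).ncard := by rwa [Set.ncard_coe_finset]
        _ ≤ _ := Set.ncard_le_ncard (fun n hn => hSU hn (hStree n hn).mem_root) (hchildren τ)
    · obtain ⟨n, hn, hτ⟩ := Set.mem_iUnion₂.mp hτ
      exact (bushy_iff.mp (hSbushy n hn) τ hτ (by rwa [← hleaf hn hτ])).trans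
        (Set.ncard_le_ncard (fun m hm => hSU hn hm) (hchildren τ))
  · rintro τ hτ
    rcases hτ.1 with rfl | hτU
    · obtain ⟨n, hn⟩ := Finset.card_pos.mp (hpos.trans_le hI)
      simpa using hτ.2 _ (hSU hn (hStree n hn).mem_root) (List.prefix_append τ [n])
    · obtain ⟨n, hn, hτS⟩ := Set.mem_iUnion₂.mp hτU
      exact hSleaf n hn τ ((hleaf hn hτS).mp hτ)

lemma IsBigAbove.bigAboveF {f : ℕ → ℕ} {σ : Str} {X : Set Str} (hf : ∀ n, 0 < f n)
    (h : IsBigAbove f X σ) : BigAboveF f {σ} X := by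
  induction h with
  | mem hσ => exact bigAboveF_singleton_of_mem hσ
  | branch I hI _ ih => exact bigAboveF_of_children (hf _) hI ih

namespace IsBigAbove

variable {f : ℕ → ℕ} {X : Set Str} {σ : Str}

lemma mono {f' : ℕ → ℕ} {Y : Set Str} (h : IsBigAbove f X σ) (hXY : X ⊆ Y)
    (hf : ∀ n, f' n ≤ f n) : IsBigAbove f' Y σ := by
  induction h with
  | mem hσ => exact .mem (hXY hσ)
  | branch I hI _ ih => exact .branch I ((hf _).trans hI) ih

lemma trans {Y : Set Str} (h : IsBigAbove f X σ) (hXY : ∀ ρ ∈ X, IsBigAbove f Y ρ) :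
    IsBigAbove f Y σ := by
  induction h with
  | mem hσ => exact hXY _ hσ
  | branch I hI _ ih => exact .branch I hI ih

lemma nonempty (hf : ∀ n, 0 < f n) (h : IsBigAbove f X σ) : X.Nonempty := by
  induction h with
  | mem hσ => exact ⟨_, hσ⟩
  | branch I hI _ ih =>
    obtain ⟨n, hn⟩ := Finset.card_pos.mp ((hf _).trans_le hI)
    exact ih n hn

lemma exists_of_subset_iUnion {ι : Type*} [Fintype ι] {W : ℕ → ℕ} {f : ι → ℕ → ℕ}
    {Y : ι → Set Str} (h : IsBigAbove W X σ) (hXY : X ⊆ ⋃ i, Y i)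
    (hW : ∀ n, ∑ i, (f i n - 1) < W n) : ∃ i, IsBigAbove (f i) (Y i) σ := by
  classical
  induction h with
  | mem hσ =>
    obtain ⟨i, hi⟩ := Set.mem_iUnion.mp (hXY hσ)
    exact ⟨i, .mem hi⟩
  | @branch τ I hI _ ih =>
    obtain ⟨n, hn⟩ := Finset.card_pos.mp ((Nat.zero_lt_of_lt (hW _)).trans_le hI)
    have : Nonempty ι := ⟨(ih n hn).choose⟩
    choose! c hc using ih
    have hcard : ∑ i, (f i τ.length - 1) < ∑ i, {n ∈ I | c n = i}.card := by
      rw [← Finset.card_eq_sum_card_fiberwise fun n _ => Finset.mem_univ (c n)]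
      exact (hW _).trans_le hI
    obtain ⟨i, -, hi⟩ := Finset.exists_lt_of_sum_lt hcard
    refine ⟨i, .branch {n ∈ I | c n = i} (by omega) fun m hm => ?_⟩
    obtain ⟨hmI, rfl⟩ := Finset.mem_filter.mp hm
    exact hc m hmI

lemma or_of_subset_union {W f₁ f₂ : ℕ → ℕ} {Y₁ Y₂ : Set Str} (h : IsBigAbove W X σ)
    (hXY : X ⊆ Y₁ ∪ Y₂) (hf₁ : ∀ n, 0 < f₁ n) (hf₂ : ∀ n, 0 < f₂ n)
    (hW : ∀ n, f₁ n + f₂ n ≤ W n + 1) : IsBigAbove f₁ Y₁ σ ∨ IsBigAbove f₂ Y₂ σ := by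
  obtain ⟨b, hb⟩ := h.exists_of_subset_iUnion (f := fun b => cond b f₁ f₂)
    (Y := fun b => cond b Y₁ Y₂) (Set.union_eq_iUnion ▸ hXY)
    fun n => by
      have := hf₁ n; have := hf₂ n; have := hW n
      simp only [Fintype.sum_bool, cond_true, cond_false]; omega
  cases b
  · exact .inr hb
  · exact .inl hb

lemma exists_of_subset_iUnion_of_card_mul {ι : Type*} [Fintype ι] [Nonempty ι]
    {Y : ι → Set Str} (hf : ∀ n, 0 < f n)
    (h : IsBigAbove (fun n => Fintype.card ι * f n) X σ) (hXY : X ⊆ ⋃ i, Y i) :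
    ∃ i, IsBigAbove f (Y i) σ :=
  h.exists_of_subset_iUnion hXY fun n => by
    have := hf n
    have := Fintype.card_pos (α := ι)
    simp only [Finset.sum_const, Finset.card_univ, smul_eq_mul]
    exact Nat.mul_lt_mul_of_pos_left (by omega) this

end IsBigAbove

/-- A binary string not below `p` leaves `p` either sideways (`none`) or through the child
`p ++ [b]` (`some b`); `exitDual p k` is a region no string of which extends a string of
`exitSet p k`. -/
def exitSet (p : List Bool) : Option Bool → Set (List Bool)
  | none => {l | ¬ l <+: p ∧ ¬ p <+: l}
  | some b => {l | p ++ [b] <+: l}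

def exitDual (p : List Bool) : Option Bool → Set (List Bool)
  | none => {l | p <+: l}
  | some b => {l | ¬ p ++ [b] <+: l}

lemma exists_mem_exitSet {p l : List Bool} (h : ¬ l <+: p) : ∃ k, l ∈ exitSet p k := by
  by_cases hpl : p <+: l
  · obtain ⟨_ | ⟨b, r⟩, rfl⟩ := hpl
    · simp at h
    · exact ⟨some b, r, by simp⟩
  · exact ⟨none, h, hpl⟩

lemma not_prefix_of_mem_exitSet_of_mem_exitDual {p l₀ l₁ : List Bool} {k : Option Bool}
    (h₀ : l₀ ∈ exitSet p k) (h₁ : l₁ ∈ exitDual p k) : ¬ l₀ <+: l₁ := by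
  cases k with
  | none =>
    intro h
    rcases List.prefix_or_prefix_of_prefix h h₁ with h | h
    exacts [h₀.1 h, h₀.2 h]
  | some b => exact fun h => h₁ (h₀.trans h)

section Splitting

variable {Γ : Str → List Bool} {B : Set Str}

lemma GammaSplit.forall_not_prefix_or {E₀ E₁ : Set Str} (h : GammaSplit Γ B E₀ E₁)
    (p : List Bool) :
    (∀ ν ∈ E₀, ν ∉ B → ¬ Γ ν <+: p) ∨ (∀ ν ∈ E₁, ν ∉ B → ¬ Γ ν <+: p) := by
  by_contra! hcon
  obtain ⟨⟨ν₀, h₀, hB₀, hp₀⟩, ⟨ν₁, h₁, hB₁, hp₁⟩⟩ := hcon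
  have hinc := h ν₀ h₀ hB₀ ν₁ h₁ hB₁
  rcases List.prefix_or_prefix_of_prefix hp₀ hp₁ with h | h
  exacts [hinc.1 h, hinc.2 h]

lemma gammaSplit_inter_exitSet_exitDual {E F : Set Str} {p : List Bool} {k : Option Bool}
    (hlen : ∀ σ ∈ F, σ ∉ B → ∀ ν ∈ E, ν ∉ B → (Γ ν).length < (Γ σ).length) :
    GammaSplit Γ B (E ∩ (B ∪ Γ ⁻¹' exitSet p k)) (F ∩ (B ∪ Γ ⁻¹' exitDual p k)) := by
  rintro ν ⟨hνE, hν⟩ hνB σ ⟨hσF, hσ⟩ hσB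
  refine ⟨not_prefix_of_mem_exitSet_of_mem_exitDual (hν.resolve_left hνB)
    (hσ.resolve_left hσB), fun h => ?_⟩
  have := hlen σ hσF hσB ν hνE hνB
  have := h.length_le
  omega

lemma exists_isBigAbove_exitSet {g : ℕ → ℕ} (hg : ∀ n, 0 < g n) {τ : Str} {A : Set Str}
    {E₀ E₁ : Str → Set Str} (hA : IsBigAbove (fun n => 3 * g n) A τ)
    (hE : ∀ ρ ∈ A, IsBigAbove (fun n => 3 * g n) (E₀ ρ) ρ ∧
      IsBigAbove (fun n => 3 * g n) (E₁ ρ) ρ)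
    (hsplit : ∀ ρ ∈ A, GammaSplit Γ B (E₀ ρ) (E₁ ρ)) (p : List Bool) :
    ∃ k, IsBigAbove g ((⋃ ρ ∈ A, E₀ ρ ∪ E₁ ρ) ∩ (B ∪ Γ ⁻¹' exitSet p k)) τ := by
  set Y := fun k => (⋃ ρ ∈ A, E₀ ρ ∪ E₁ ρ) ∩ (B ∪ Γ ⁻¹' exitSet p k)
  have hside {ρ} (hρ : ρ ∈ A) {E} (hEρ : E ⊆ E₀ ρ ∪ E₁ ρ)
      (hE : IsBigAbove (fun n => 3 * g n) E ρ) (hp : ∀ ν ∈ E, ν ∉ B → ¬ Γ ν <+: p) :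
      ∃ k, IsBigAbove g (Y k) ρ := by
    refine IsBigAbove.exists_of_subset_iUnion_of_card_mul hg hE fun ν hν => ?_
    have hνY : ν ∈ ⋃ ρ ∈ A, E₀ ρ ∪ E₁ ρ := Set.mem_biUnion hρ (hEρ hν)
    by_cases hνB : ν ∈ B
    · exact Set.mem_iUnion.mpr ⟨none, hνY, .inl hνB⟩
    · obtain ⟨k, hk⟩ := exists_mem_exitSet (hp ν hν hνB)
      exact Set.mem_iUnion.mpr ⟨k, hνY, .inr hk⟩
  obtain ⟨k, hk⟩ := hA.exists_of_subset_iUnion_of_card_mul hg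
    (Y := fun k => {ρ | IsBigAbove g (Y k) ρ}) fun ρ hρ => by
      rcases (hsplit ρ hρ).forall_not_prefix_or p with hp | hp
      · exact Set.mem_iUnion.mpr (hside hρ Set.subset_union_left (hE ρ hρ).1 hp)
      · exact Set.mem_iUnion.mpr (hside hρ Set.subset_union_right (hE ρ hρ).2 hp)
  exact ⟨k, hk.trans fun ρ hρ => hρ⟩

lemma exists_maximal_isBigAbove_preimage_prefix {f : ℕ → ℕ} (hf : ∀ n, 0 < f n) {σ : Str}
    {F : Set Str} (hF : F.Finite) (h : IsBigAbove f F σ) :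
    ∃ p, IsBigAbove f (F ∩ Γ ⁻¹' {l | p <+: l}) σ ∧
      ∀ b, ¬ IsBigAbove f (F ∩ Γ ⁻¹' {l | p ++ [b] <+: l}) σ := by
  set V := {p | IsBigAbove f (F ∩ Γ ⁻¹' {l | p <+: l}) σ}
  have hV : V.Finite := (hF.biUnion fun s _ => (Γ s).inits.finite_toSet).subset fun p hp => by
    obtain ⟨s, hsF, hs⟩ := hp.nonempty hf
    exact Set.mem_biUnion hsF ((List.mem_inits _ _).mpr hs)
  obtain ⟨p, hp, hmax⟩ := hV.exists_maximalFor List.length V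
    ⟨[], h.mono (fun s hs => ⟨hs, List.nil_prefix⟩) fun _ => le_rfl⟩
  refine ⟨p, hp, fun b hb => ?_⟩
  simpa using hmax hb (by simp)

lemma exists_forall_isBigAbove_exitDual {h : ℕ → ℕ} (hh : ∀ n, 0 < h n) {σ : Str}
    {F : Set Str} (hF : F.Finite) (hbig : IsBigAbove (fun n => 3 * h n) F σ) :
    ∃ p, ∀ k, IsBigAbove h (F ∩ (B ∪ Γ ⁻¹' exitDual p k)) σ := by
  by_cases hFB : IsBigAbove h (F ∩ B) σ
  · exact ⟨[], fun k =>
      hFB.mono (Set.inter_subset_inter_right _ Set.subset_union_left) fun _ => le_rfl⟩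
  have hpos : ∀ n, 0 < 2 * h n + 1 := by omega
  have hsum : ∀ n, h n + (2 * h n + 1) ≤ 3 * h n + 1 := by omega
  obtain ⟨p, hp, hmax⟩ := exists_maximal_isBigAbove_preimage_prefix (Γ := Γ) hpos hF.sdiff
    ((hbig.or_of_subset_union (Set.inter_union_sdiff F B).symm.subset hh hpos hsum).resolve_left
      hFB)
  refine ⟨p, fun k => ?_⟩
  cases k with
  | none => exact hp.mono (fun s ⟨⟨hsF, _⟩, hs⟩ => ⟨hsF, .inr hs⟩) (by omega)
  | some b =>
    refine (hbig.or_of_subset_union (fun s hsF => ?_) hh hpos hsum).resolve_right (hmax b)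
    by_cases hsB : s ∈ B
    · exact .inl ⟨hsF, .inl hsB⟩
    by_cases hs : p ++ [b] <+: Γ s
    · exact .inr ⟨⟨hsF, hsB⟩, hs⟩
    · exact .inl ⟨hsF, .inr hs⟩

end Splitting

lemma MemQ.pos {f : ℕ → ℕ} (hf : MemQ f) (n : ℕ) : 0 < f n :=
  Nat.lt_of_lt_of_le two_pos (hf.2.2.1 n)

theorem splitting_combinatorial_lemma_general (g h : ℕ → ℕ) (hg : MemQ g) (hh : MemQ h)
    (Γ : Str → List Bool)
    (B : Set Str) (τ τs : Str)
    (A : Set Str)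
    (hAbig : BigAboveF (fun n => 3 * g n) {τ} A)
    (E₀ E₁ : Str → Set Str)
    (hEbig : ∀ ρ ∈ A,
      BigAboveF (fun n => 3 * g n) {ρ} (E₀ ρ) ∧ BigAboveF (fun n => 3 * g n) {ρ} (E₁ ρ))
    (hEsplit : ∀ ρ ∈ A, GammaSplit Γ B (E₀ ρ) (E₁ ρ))
    (F : Set Str) (hFfin : F.Finite)
    (hFbig : BigAboveF (fun n => 3 * h n) {τs} F)
    (hlen : ∀ σ ∈ F, σ ∉ B → ∀ ν ∈ ⋃ ρ ∈ A, E₀ ρ ∪ E₁ ρ, ν ∉ B →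
      (Γ ν).length < (Γ σ).length) :
    ∃ E' F' : Set Str,
      E' ⊆ (⋃ ρ ∈ A, E₀ ρ ∪ E₁ ρ) ∧ BigAboveF g {τ} E' ∧
      F' ⊆ F ∧ BigAboveF h {τs} F' ∧ GammaSplit Γ B E' F' := by
  obtain ⟨p, hF⟩ := exists_forall_isBigAbove_exitDual (Γ := Γ) (B := B) hh.pos hFfin
    hFbig.isBigAbove
  obtain ⟨k, hE⟩ := exists_isBigAbove_exitSet hg.pos hAbig.isBigAbove
    (fun ρ hρ => ⟨(hEbig ρ hρ).1.isBigAbove, (hEbig ρ hρ).2.isBigAbove⟩) hEsplit p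
  exact ⟨_, _, Set.inter_subset_left, hE.bigAboveF hg.pos, Set.inter_subset_left,
    (hF k).bigAboveF hh.pos, gammaSplit_inter_exitSet_exitDual hlen⟩

/-- The combinatorial splitting lemma (Kumabe–Lewis, Lemma 6.2, mod `B`). -/
theorem splitting_combinatorial_lemma (g h : ℕ → ℕ) (hg : MemQ g) (hh : MemQ h)
    (Γ : Str → List Bool) (hΓ : Computable Γ)
    (hmono : ∀ σ τ : Str, σ <+: τ → Γ σ <+: Γ τ)
    (B : Set Str) (τ τs : Str)
    (A : Set Str) (hAfin : A.Finite) (hApf : PrefixFree A) (hAext : ∀ ρ ∈ A, τ <+: ρ)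
    (hAbig : BigAboveF (fun n => 3 * g n) {τ} A)
    (E₀ E₁ : Str → Set Str)
    (hEfin : ∀ ρ ∈ A, (E₀ ρ).Finite ∧ (E₁ ρ).Finite)
    (hEext : ∀ ρ ∈ A, (∀ σ ∈ E₀ ρ, ρ <+: σ) ∧ (∀ σ ∈ E₁ ρ, ρ <+: σ))
    (hEbig : ∀ ρ ∈ A,
      BigAboveF (fun n => 3 * g n) {ρ} (E₀ ρ) ∧ BigAboveF (fun n => 3 * g n) {ρ} (E₁ ρ))
    (hEsplit : ∀ ρ ∈ A, GammaSplit Γ B (E₀ ρ) (E₁ ρ))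
    (F : Set Str) (hFfin : F.Finite)
    (hFbig : BigAboveF (fun n => 3 * h n) {τs} F)
    (hlen : ∀ σ ∈ F, σ ∉ B → ∀ ν ∈ ⋃ ρ ∈ A, E₀ ρ ∪ E₁ ρ, ν ∉ B →
      (Γ ν).length < (Γ σ).length) :
    ∃ E' F' : Set Str,
      E' ⊆ (⋃ ρ ∈ A, E₀ ρ ∪ E₁ ρ) ∧ BigAboveF g {τ} E' ∧
      F' ⊆ F ∧ BigAboveF h {τs} F' ∧ GammaSplit Γ B E' F' :=
  splitting_combinatorial_lemma_general g h hg hh Γ B τ τs A hAbig E₀ E₁ hEbig hEsplit F hFfin hFbig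
    hlen
end

section
/- Let 𝓑 be a finite collection of open sets of strings, let g be a bounding function, and let A be a finite prefix-free set of strings. Suppose that each B ∈ 𝓑 is g-big above every string σ ∈ A^≼. Then the intersection ⋂𝓑 is g-big above A. -/
/-- A set of strings is open if it is upwards closed under extension. -/
def OpenStr (B : Set Str) : Prop := ∀ σ ∈ B, ∀ τ : Str, σ <+: τ → τ ∈ B

/-!
Bigness is transitive: grafting onto each leaf of a `g`-bushy forest witnessing that `C` is big
above `A` a `g`-bushy forest witnessing that `D` is big above that leaf yields a `g`-bushy
forest witnessing that `D` is big above `A`. Now induct on `𝓑`: if `⋂ 𝓒` is big above `A`,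
then `B` is big above each leaf `τ ∈ ⋂ 𝓒` of the witnessing forest, and since the members of
`𝓒` are open, all strings extending `τ`, in particular the leaves of `B`'s forest, stay in `⋂ 𝓒`.
-/

lemma IsLeaf.eq_of_prefix_of_prefix {T : Set Str} {τ τ' υ : Str} (hτ : IsLeaf T τ)
    (hτ' : IsLeaf T τ') (h : τ <+: υ) (h' : τ' <+: υ) : τ = τ' := by
  rcases List.prefix_or_prefix_of_prefix h h' with h | h
  · exact (hτ.2 τ' hτ'.1 h).symm
  · exact hτ'.2 τ hτ.1 h

lemma IsForestAbove.prefix_of_mem {τ ρ : Str} {S : Set Str} (hS : IsForestAbove {τ} S)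
    (hρ : ρ ∈ S) : τ <+: ρ := by
  obtain ⟨_, rfl, h⟩ := hS.2.1 hρ
  exact h

lemma Bushy.le_ncard_of_subset {h : ℕ → ℕ} {T U : Set Str} (hT : Bushy h T) (hTU : T ⊆ U)
    (hU : U.Finite) {τ : Str} (hτ : τ ∈ T) (hnl : ¬ IsLeaf T τ) :
    h τ.length ≤ {ρ ∈ U | τ <+: ρ ∧ ρ.length = τ.length + 1}.ncard :=
  (hT τ hτ hnl).trans <|
    Set.ncard_le_ncard (fun _ hρ => ⟨hTU hρ.1, hρ.2⟩) (hU.subset fun _ hρ => hρ.1)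

lemma PrefixFree.bigAboveF_of_subset {g : ℕ → ℕ} {A B : Set Str} (hApf : PrefixFree A)
    (hA : A.Finite) (hAB : A ⊆ B) : BigAboveF g A B := by
  have hleaf : ∀ σ ∈ A, IsLeaf A σ := fun σ hσ => ⟨hσ, fun τ hτ h => (hApf σ hσ τ hτ h).symm⟩
  refine ⟨A, hA, ⟨subset_rfl, fun σ hσ => ⟨σ, hσ, List.prefix_refl σ⟩, fun σ hσ => ?_⟩,
    fun σ hσ hnl => absurd (hleaf σ hσ) hnl, fun σ hσ => hAB hσ.1⟩
  refine ⟨⟨σ, hσ, List.prefix_refl σ⟩, fun τ hτ => hτ.2, fun τ hτ ρ hσρ hρτ => ?_⟩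
  obtain rfl : σ = τ := hApf σ hσ τ hτ.1 hτ.2
  obtain rfl : ρ = σ := hρτ.sublist.antisymm hσρ.sublist
  exact hτ

lemma BigAboveF.inter_of_subset {g : ℕ → ℕ} {A B C : Set Str} (hB : BigAboveF g A B)
    (hC : OpenStr C) (hAC : A ⊆ C) : BigAboveF g A (B ∩ C) := by
  obtain ⟨T, hTfin, hTf, hTb, hTB⟩ := hB
  refine ⟨T, hTfin, hTf, hTb, fun ρ hρ => ⟨hTB ρ hρ, ?_⟩⟩
  obtain ⟨σ, hσ, hσρ⟩ := hTf.2.1 hρ.1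
  exact hC σ (hAC hσ) ρ hσρ

lemma OpenStr.sInter {𝓑 : Set (Set Str)} (h𝓑 : ∀ B ∈ 𝓑, OpenStr B) : OpenStr (⋂₀ 𝓑) :=
  fun _ hσ τ hστ B hB => h𝓑 B hB _ (hσ B hB) τ hστ

def graft (T : Set Str) (S : Str → Set Str) : Set Str :=
  {ρ | ρ ∈ T ∨ ∃ τ, IsLeaf T τ ∧ ρ ∈ S τ}

section Graft

variable {A T : Set Str} {S : Str → Set Str}

lemma finite_graft (hT : T.Finite) (hS : ∀ τ, IsLeaf T τ → (S τ).Finite) :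
    (graft T S).Finite := by
  refine (hT.union ((hT.subset fun _ hτ => hτ.1).biUnion hS)).subset ?_
  rintro ρ (hρ | ⟨τ, hτ, hρ⟩)
  · exact Or.inl hρ
  · exact Or.inr (Set.mem_biUnion hτ hρ)

variable (hS : ∀ τ, IsLeaf T τ → IsForestAbove {τ} (S τ))
include hS

lemma isLeaf_graft {τ ρ : Str} (hτ : IsLeaf T τ) (hρ : IsLeaf (S τ) ρ) :
    IsLeaf (graft T S) ρ := by
  have hτρ : τ <+: ρ := (hS τ hτ).prefix_of_mem hρ.1
  refine ⟨Or.inr ⟨τ, hτ, hρ.1⟩, ?_⟩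
  rintro υ (hυ | ⟨τ', hτ', hυ⟩) hρυ
  · obtain rfl : υ = τ := hτ.2 υ hυ (hτρ.trans hρυ)
    exact hτρ.sublist.antisymm hρυ.sublist
  · obtain rfl : τ = τ' :=
      hτ.eq_of_prefix_of_prefix hτ' (hτρ.trans hρυ) ((hS τ' hτ').prefix_of_mem hυ)
    exact hρ.2 υ hυ hρυ

lemma exists_isLeaf_of_isLeaf_graft {ρ : Str} (hρ : IsLeaf (graft T S) ρ) :
    ∃ τ, IsLeaf T τ ∧ IsLeaf (S τ) ρ := by
  have hmax : ∀ τ, IsLeaf T τ → ρ ∈ S τ → IsLeaf (S τ) ρ :=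
    fun τ hτ hρτ => ⟨hρτ, fun υ hυ => hρ.2 υ (Or.inr ⟨τ, hτ, hυ⟩)⟩
  rcases hρ.1 with hρT | ⟨τ, hτ, hρτ⟩
  · have hleaf : IsLeaf T ρ := ⟨hρT, fun υ hυ => hρ.2 υ (Or.inl hυ)⟩
    exact ⟨ρ, hleaf, hmax ρ hleaf ((hS ρ hleaf).1 rfl)⟩
  · exact ⟨τ, hτ, hmax τ hτ hρτ⟩

lemma isForestAbove_graft (hT : IsForestAbove A T) : IsForestAbove A (graft T S) := by
  refine ⟨fun σ hσ => Or.inl (hT.1 hσ), ?_, fun σ hσ => ?_⟩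
  · rintro ρ (hρ | ⟨τ, hτ, hρ⟩)
    · exact hT.2.1 hρ
    · obtain ⟨σ, hσ, hστ⟩ := hT.2.1 hτ.1
      exact ⟨σ, hσ, hστ.trans ((hS τ hτ).prefix_of_mem hρ)⟩
  have hTσ := (hT.2.2 σ hσ).2.2
  refine ⟨⟨σ, Or.inl (hT.1 hσ), List.prefix_refl σ⟩, fun τ hτ => hτ.2,
    fun υ hυ ρ hσρ hρυ => ⟨?_, hσρ⟩⟩
  rcases hυ.1 with hυT | ⟨τ, hτ, hυS⟩
  · exact Or.inl (hTσ υ ⟨hυT, hυ.2⟩ ρ hσρ hρυ).1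
  · have hτυ : τ <+: υ := (hS τ hτ).prefix_of_mem hυS
    rcases List.prefix_or_prefix_of_prefix hρυ hτυ with hρτ | hτρ
    · exact Or.inl (hTσ τ ⟨hτ.1, hσρ.trans hρτ⟩ ρ hσρ hρτ).1
    · have hSτ := ((hS τ hτ).2.2 τ rfl).2.2
      exact Or.inr ⟨τ, hτ, (hSτ υ ⟨hυS, hτυ⟩ ρ hτρ hρυ).1⟩

lemma bushy_graft {g : ℕ → ℕ} (hT : Bushy g T) (hSb : ∀ τ, IsLeaf T τ → Bushy g (S τ))
    (hfin : (graft T S).Finite) : Bushy g (graft T S) := by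
  have hsub : ∀ τ, IsLeaf T τ → S τ ⊆ graft T S := fun τ hτ _ hρ => Or.inr ⟨τ, hτ, hρ⟩
  intro ρ hρ hnl
  rcases hρ with hρT | ⟨τ, hτ, hρS⟩
  · by_cases hleaf : IsLeaf T ρ
    · exact (hSb ρ hleaf).le_ncard_of_subset (hsub ρ hleaf) hfin ((hS ρ hleaf).1 rfl)
        fun h => hnl (isLeaf_graft hS hleaf h)
    · exact hT.le_ncard_of_subset (fun _ => Or.inl) hfin hρT hleaf
  · exact (hSb τ hτ).le_ncard_of_subset (hsub τ hτ) hfin hρS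
      fun h => hnl (isLeaf_graft hS hτ h)

end Graft

theorem BigAboveF.trans {g : ℕ → ℕ} {A C D : Set Str} (hC : BigAboveF g A C)
    (hD : ∀ τ ∈ above A, τ ∈ C → BigAboveF g {τ} D) : BigAboveF g A D := by
  obtain ⟨T, hTfin, hTf, hTb, hTC⟩ := hC
  have hleaf : ∀ τ, IsLeaf T τ → ∃ S : Set Str, S.Finite ∧ IsForestAbove {τ} S ∧ Bushy g S ∧
      ∀ ρ, IsLeaf S ρ → ρ ∈ D := fun τ hτ => hD τ (hTf.2.1 hτ.1) (hTC τ hτ)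
  choose! S hSfin hSf hSb hSD using hleaf
  have hfin := finite_graft hTfin hSfin
  refine ⟨graft T S, hfin, isForestAbove_graft hSf hTf, bushy_graft hSf hTb hSb hfin,
    fun ρ hρ => ?_⟩
  obtain ⟨τ, hτ, hρτ⟩ := exists_isLeaf_of_isLeaf_graft hSf hρ
  exact hSD τ hτ ρ hρτ

theorem intersection_of_open_big_sets_general (g : ℕ → ℕ)
    (𝓑 : Set (Set Str)) (h𝓑 : 𝓑.Finite) (hopen : ∀ B ∈ 𝓑, OpenStr B)
    (A : Set Str) (hA : A.Finite) (hApf : PrefixFree A)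
    (hbig : ∀ B ∈ 𝓑, ∀ σ ∈ above A, BigAboveF g {σ} B) :
    BigAboveF g A (⋂₀ 𝓑) := by
  refine Set.Finite.induction_on_subset (motive := fun 𝓒 _ => BigAboveF g A (⋂₀ 𝓒)) 𝓑 h𝓑
    ?_ fun {B 𝓒} hB h𝓒 _ ih => ?_
  · simpa using hApf.bigAboveF_of_subset (g := g) hA (Set.subset_univ A)
  rw [Set.sInter_insert]
  refine ih.trans fun τ hτA hτ => ?_
  exact (hbig B hB τ hτA).inter_of_subset (OpenStr.sInter fun C hC => hopen C (h𝓒 hC))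
    (Set.singleton_subset_iff.2 hτ)

/-- If every member of a finite family `𝓑` of open sets of strings is `g`-big
above every string in `A^≼`, where `A` is finite and prefix-free, then `⋂ 𝓑`
is `g`-big above `A`. -/
theorem intersection_of_open_big_sets (g : ℕ → ℕ) (hg : Bounding g)
    (𝓑 : Set (Set Str)) (h𝓑 : 𝓑.Finite) (hopen : ∀ B ∈ 𝓑, OpenStr B)
    (A : Set Str) (hA : A.Finite) (hApf : PrefixFree A)
    (hbig : ∀ B ∈ 𝓑, ∀ σ ∈ above A, BigAboveF g {σ} B) :
    BigAboveF g A (⋂₀ 𝓑) :=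
  intersection_of_open_big_sets_general g 𝓑 h𝓑 hopen A hA hApf hbig
end

section
/- (Weak concatenation property for pairs) Let A, B, C be sets of pairs of strings with C open, and let g, h be bounding functions. Suppose that B is (g,h)-big above A, and that for every (τ,ρ) ∈ B and every string τ' extending τ, C is (g,h)-big above the pair (τ',ρ). Then C is (g,h)-big above A. -/
/-- The section `T(τ) = {ρ : (τ, ρ) ∈ T}` of a set of pairs of strings. -/
def sec (T : Set (Str × Str)) (τ : Str) : Set Str := {ρ | (τ, ρ) ∈ T}

/-- The domain `{τ : T(τ) ≠ ∅}` of a set of pairs of strings. -/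
def domP (T : Set (Str × Str)) : Set Str := {τ | ∃ ρ, (τ, ρ) ∈ T}

/-- A set of pairs of strings is prefix-free if its domain is prefix-free and
each of its sections is prefix-free. -/
def PrefixFree2 (A : Set (Str × Str)) : Prop :=
  PrefixFree (domP A) ∧ ∀ τ ∈ domP A, PrefixFree (sec A τ)

/-- A length-2 forest system above the finite prefix-free set `A` of pairs of
strings: `dom T` is a forest above `dom A`; for every `τ ∈ dom T`, `T(τ)` is a
finite forest above `A(τ⁻)`, where `τ⁻` is the (unique) element of `dom A` that
`τ` extends; and `T(τ')` end-extends `T(τ)` whenever `τ ≼ τ'` in `dom T`. -/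
def IsForestSys (A T : Set (Str × Str)) : Prop :=
  IsForestAbove (domP A) (domP T) ∧
  (∀ τ ∈ domP T, (sec T τ).Finite ∧
    ∀ σ ∈ domP A, σ <+: τ → IsForestAbove (sec A σ) (sec T τ)) ∧
  ∀ τ ∈ domP T, ∀ τ' ∈ domP T, τ <+: τ' → EndExt (sec T τ) (sec T τ')

/-- A forest system is `(g, h)`-bushy if its domain is `g`-bushy and each of its
sections is `h`-bushy. -/
def Bushy2 (g h : ℕ → ℕ) (T : Set (Str × Str)) : Prop :=
  Bushy g (domP T) ∧ ∀ τ ∈ domP T, Bushy h (sec T τ)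

/-- A leaf of a forest system: a pair `(τ, ρ)` with `τ` a leaf of `dom T` and
`ρ` a leaf of `T(τ)`. -/
def IsLeaf2 (T : Set (Str × Str)) (p : Str × Str) : Prop :=
  IsLeaf (domP T) p.1 ∧ IsLeaf (sec T p.1) p.2

/-- `B` is `(g, h)`-big above the finite prefix-free set `A` of pairs of
strings: some finite `(g, h)`-bushy forest system above `A` has all of its
leaves in `B`. -/
def BigAboveF2 (g h : ℕ → ℕ) (A B : Set (Str × Str)) : Prop :=
  ∃ T : Set (Str × Str), T.Finite ∧ IsForestSys A T ∧ Bushy2 g h T ∧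
    ∀ p : Str × Str, IsLeaf2 T p → p ∈ B

/-- `B` is `(g, h)`-big above an arbitrary set `A` of pairs of strings: `B` is
`(g, h)`-big above every finite prefix-free subset of `A`. -/
def BigAbove2 (g h : ℕ → ℕ) (A B : Set (Str × Str)) : Prop :=
  ∀ A' : Set (Str × Str), A' ⊆ A → A'.Finite → PrefixFree2 A' → BigAboveF2 g h A' B

/-- A set of pairs of strings is open if it is upwards closed under
coordinatewise extension. -/
def Open2 (C : Set (Str × Str)) : Prop :=
  ∀ p ∈ C, ∀ q : Str × Str, p.1 <+: q.1 → p.2 <+: q.2 → q ∈ C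

/-!
Take a `(g, h)`-bushy forest system `T` above `A` whose leaves lie in `B`, and fix a leaf `τ` of
`dom T`. The leaves `ρ` of `T(τ)` are handled one at a time: a system above `(τ, ρ₀)` is grown
while the remaining `ρ` are carried along unchanged in every section, and the others are then
handled at each leaf `τ₂` of the new domain. Since `C` is open, a leaf `(τ₂, ρ)` already in `C`
stays in `C` as the first coordinate is extended further, so this yields a system above
`{τ} × leaves T(τ)` with leaves in `C`. Grafting this system `W` onto `T`, so that a node `τ'`
of `dom W` gets the section `T(τ) ∪ W(τ')`, which end-extends `T(τ)`, and doing so at every leaf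
of `dom T` gives the required system above `A`.
-/

open Set

theorem List.IsPrefix.antisymm {α : Type*} {l₁ l₂ : List α} (h₁ : l₁ <+: l₂) (h₂ : l₂ <+: l₁) :
    l₁ = l₂ :=
  h₁.eq_of_length (h₁.length_le.antisymm h₂.length_le)

def leaves (T : Set Str) : Set Str := {τ | IsLeaf T τ}

theorem IsLeaf.mono {S T : Set Str} {x : Str} (h : IsLeaf T x) (hST : S ⊆ T) (hx : x ∈ S) :
    IsLeaf S x :=
  ⟨hx, fun ρ hρ hxρ => h.2 ρ (hST hρ) hxρ⟩

theorem PrefixFree.mono {A B : Set Str} (hA : PrefixFree A) (hBA : B ⊆ A) : PrefixFree B :=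
  fun σ hσ τ hτ => hA σ (hBA hσ) τ (hBA hτ)

theorem PrefixFree.eq_of_prefix {A : Set Str} (hA : PrefixFree A) {σ τ ρ : Str} (hσ : σ ∈ A)
    (hτ : τ ∈ A) (hσρ : σ <+: ρ) (hτρ : τ <+: ρ) : σ = τ := by
  rcases List.prefix_or_prefix_of_prefix hσρ hτρ with h | h
  · exact hA σ hσ τ hτ h
  · exact (hA τ hτ σ hσ h).symm

theorem PrefixFree.isLeaf {A : Set Str} (hA : PrefixFree A) {σ : Str} (hσ : σ ∈ A) :
    IsLeaf A σ :=
  ⟨hσ, fun τ hτ hστ => (hA σ hσ τ hτ hστ).symm⟩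

theorem PrefixFree.isLeaf_iff {A : Set Str} (hA : PrefixFree A) {σ : Str} :
    IsLeaf A σ ↔ σ ∈ A :=
  ⟨fun h => h.1, hA.isLeaf⟩

theorem prefixFree_leaves (T : Set Str) : PrefixFree (leaves T) :=
  fun _ hσ τ hτ hστ => (hσ.2 τ hτ.1 hστ).symm

theorem Set.Finite.exists_isLeaf_prefix {T : Set Str} (hT : T.Finite) {τ : Str} (hτ : τ ∈ T) :
    ∃ ℓ, IsLeaf T ℓ ∧ τ <+: ℓ := by
  obtain ⟨ℓ, ⟨hℓ, hτℓ⟩, hmax⟩ := (hT.subset (sep_subset T (τ <+: ·))).exists_maximalFor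
    List.length _ ⟨τ, hτ, List.prefix_rfl⟩
  refine ⟨ℓ, ⟨hℓ, fun ρ hρ hℓρ => ?_⟩, hτℓ⟩
  exact (hℓρ.eq_of_length (hℓρ.length_le.antisymm (hmax ⟨hρ, hτℓ.trans hℓρ⟩ hℓρ.length_le))).symm

theorem isForestAbove_iff {A T : Set Str} :
    IsForestAbove A T ↔
      A ⊆ T ∧ T ⊆ above A ∧ ∀ σ ∈ A, ∀ τ ∈ T, ∀ ρ, σ <+: ρ → ρ <+: τ → ρ ∈ T := by
  refine ⟨fun h => ⟨h.1, h.2.1, fun σ hσ τ hτ ρ hσρ hρτ => ?_⟩, fun ⟨hAT, hTA, hcl⟩ =>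
    ⟨hAT, hTA, fun σ hσ => ⟨⟨σ, hAT hσ, List.prefix_rfl⟩, fun _ hτ => hτ.2,
      fun τ hτ ρ hσρ hρτ => ⟨hcl σ hσ τ hτ.1 ρ hσρ hρτ, hσρ⟩⟩⟩⟩
  exact ((h.2.2 σ hσ).2.2 τ ⟨hτ, hσρ.trans hρτ⟩ ρ hσρ hρτ).1

theorem IsForestAbove.mem_of_prefix {A T : Set Str} (h : IsForestAbove A T) {σ τ ρ : Str}
    (hσ : σ ∈ A) (hτ : τ ∈ T) (hσρ : σ <+: ρ) (hρτ : ρ <+: τ) : ρ ∈ T :=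
  (isForestAbove_iff.1 h).2.2 σ hσ τ hτ ρ hσρ hρτ

theorem PrefixFree.isForestAbove_self {A : Set Str} (hA : PrefixFree A) : IsForestAbove A A :=
  isForestAbove_iff.2 ⟨subset_rfl, fun τ hτ => ⟨τ, hτ, List.prefix_rfl⟩,
    fun σ hσ τ hτ ρ hσρ hρτ => by
      obtain rfl := hA σ hσ τ hτ (hσρ.trans hρτ)
      rwa [hρτ.antisymm hσρ]⟩

theorem PrefixFree.bushy {h : ℕ → ℕ} {A : Set Str} (hA : PrefixFree A) : Bushy h A :=
  fun _ hτ hnl => absurd (hA.isLeaf hτ) hnl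

theorem Bushy.of_cover {h : ℕ → ℕ} {U : Set Str} (hU : U.Finite)
    (hcover : ∀ τ ∈ U, ¬ IsLeaf U τ → ∃ X ⊆ U, Bushy h X ∧ τ ∈ X ∧ ¬ IsLeaf X τ) :
    Bushy h U := by
  intro τ hτ hnl
  obtain ⟨X, hXU, hX, hτX, hnlX⟩ := hcover τ hτ hnl
  exact (hX τ hτX hnlX).trans
    (ncard_le_ncard (fun ρ hρ => ⟨hXU hρ.1, hρ.2⟩) (hU.subset (sep_subset _ _)))

theorem EndExt.refl (S : Set Str) : EndExt S S :=
  ⟨subset_rfl, fun _ hτ hτS => absurd hτ hτS⟩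

theorem EndExt.trans {S R Q : Set Str} (h₁ : EndExt S R) (h₂ : EndExt R Q) : EndExt S Q := by
  refine ⟨h₁.1.trans h₂.1, fun x hx hxS => ?_⟩
  by_cases hxR : x ∈ R
  · exact h₁.2 x hxR hxS
  · obtain ⟨ℓ, hℓ, hℓx⟩ := h₂.2 x hx hxR
    by_cases hℓS : ℓ ∈ S
    · exact ⟨ℓ, hℓ.mono h₁.1 hℓS, hℓx⟩
    · obtain ⟨ρ, hρ, hρℓ⟩ := h₁.2 ℓ hℓ.1 hℓS
      exact ⟨ρ, hρ, hρℓ.trans hℓx⟩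

theorem EndExt.union_left {F G₁ G₂ : Set Str} (h : EndExt G₁ G₂)
    (hleaf : ∀ ℓ, IsLeaf G₁ ℓ → IsLeaf (F ∪ G₁) ℓ) : EndExt (F ∪ G₁) (F ∪ G₂) := by
  refine ⟨union_subset_union_right F h.1, ?_⟩
  rintro x (hx | hx) hxFG
  · exact absurd (Or.inl hx) hxFG
  · obtain ⟨ℓ, hℓ, hℓx⟩ := h.2 x hx fun hxG => hxFG (Or.inr hxG)
    exact ⟨ℓ, hleaf ℓ hℓ, hℓx⟩

section Graft

variable {A F G L : Set Str}

theorem IsForestAbove.graft (hF : IsForestAbove A F) (hG : IsForestAbove L G) (hLF : L ⊆ F) :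
    IsForestAbove A (F ∪ G) := by
  obtain ⟨hAF, hFA, -⟩ := isForestAbove_iff.1 hF
  refine isForestAbove_iff.2 ⟨hAF.trans subset_union_left, union_subset hFA fun τ hτ => ?_,
    fun σ hσ τ hτ ρ hσρ hρτ => ?_⟩
  · obtain ⟨ℓ, hℓ, hℓτ⟩ := hG.2.1 hτ
    obtain ⟨σ, hσ, hσℓ⟩ := hFA (hLF hℓ)
    exact ⟨σ, hσ, hσℓ.trans hℓτ⟩
  · rcases hτ with hτ | hτ
    · exact Or.inl (hF.mem_of_prefix hσ hτ hσρ hρτ)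
    · obtain ⟨ℓ, hℓ, hℓτ⟩ := hG.2.1 hτ
      rcases List.prefix_or_prefix_of_prefix hρτ hℓτ with hρℓ | hℓρ
      · exact Or.inl (hF.mem_of_prefix hσ (hLF hℓ) hσρ hρℓ)
      · exact Or.inr (hG.mem_of_prefix hℓ hτ hℓρ hρτ)

theorem isLeaf_graft_iff (hG : IsForestAbove L G) (hL : L ⊆ leaves F) {x : Str} :
    IsLeaf (F ∪ G) x ↔ IsLeaf G x ∨ (IsLeaf F x ∧ x ∉ L) := by
  constructor
  · intro hx
    by_cases hxG : x ∈ G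
    · exact Or.inl (hx.mono subset_union_right hxG)
    · exact Or.inr ⟨hx.mono subset_union_left (hx.1.resolve_right hxG),
        fun hxL => hxG (hG.1 hxL)⟩
  · rintro (hx | ⟨hx, hxL⟩)
    · refine ⟨Or.inr hx.1, ?_⟩
      rintro ρ (hρ | hρ) hxρ
      · obtain ⟨ℓ, hℓ, hℓx⟩ := hG.2.1 hx.1
        obtain rfl : ρ = ℓ := (hL hℓ).2 ρ hρ (hℓx.trans hxρ)
        exact hℓx.antisymm hxρ
      · exact hx.2 ρ hρ hxρ
    · refine ⟨Or.inl hx.1, ?_⟩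
      rintro ρ (hρ | hρ) hxρ
      · exact hx.2 ρ hρ hxρ
      · obtain ⟨ℓ, hℓ, hℓρ⟩ := hG.2.1 hρ
        obtain rfl := (prefixFree_leaves F).eq_of_prefix hx (hL hℓ) hxρ hℓρ
        exact absurd hℓ hxL

theorem EndExt.graft (hG : IsForestAbove L G) (hL : L ⊆ leaves F) : EndExt F (F ∪ G) :=
  ⟨subset_union_left, fun _ hτ hτF => by
    obtain ⟨ℓ, hℓ, hℓτ⟩ := hG.2.1 (hτ.resolve_left hτF)
    exact ⟨ℓ, hL hℓ, hℓτ⟩⟩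

theorem Bushy.graft {h : ℕ → ℕ} (hF : Bushy h F) (hGb : Bushy h G) (hG : IsForestAbove L G)
    (hL : L ⊆ leaves F) (hfin : (F ∪ G).Finite) : Bushy h (F ∪ G) :=
  Bushy.of_cover hfin fun τ hτ hnl => by
    rw [isLeaf_graft_iff hG hL, not_or, not_and_or, not_not] at hnl
    by_cases hτG : τ ∈ G
    · exact ⟨G, subset_union_right, hGb, hτG, hnl.1⟩
    · exact ⟨F, subset_union_left, hF, hτ.resolve_right hτG,
        hnl.2.resolve_right fun hτL => hτG (hG.1 hτL)⟩

end Graft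

section BiUnion

variable {ι : Type*} {s : Set ι} {A F : ι → Set Str}

theorem isLeaf_biUnion_iff (hsep : ∀ i ∈ s, ∀ j ∈ s, ∀ x ∈ F i, ∀ y ∈ F j, x <+: y → i = j)
    {i : ι} (hi : i ∈ s) {x : Str} (hx : x ∈ F i) :
    IsLeaf (⋃ j ∈ s, F j) x ↔ IsLeaf (F i) x := by
  refine ⟨fun h => h.mono (subset_biUnion_of_mem hi) hx,
    fun h => ⟨mem_biUnion hi hx, fun ρ hρ hxρ => ?_⟩⟩
  obtain ⟨j, hj, hρj⟩ := mem_iUnion₂.1 hρ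
  obtain rfl := hsep i hi j hj x hx ρ hρj hxρ
  exact h.2 ρ hρj hxρ

theorem IsForestAbove.biUnion
    (hsep : ∀ i ∈ s, ∀ j ∈ s, ∀ x ∈ F i, ∀ y ∈ F j, x <+: y → i = j)
    (hF : ∀ i ∈ s, IsForestAbove (A i) (F i)) :
    IsForestAbove (⋃ i ∈ s, A i) (⋃ i ∈ s, F i) := by
  refine isForestAbove_iff.2 ⟨biUnion_mono subset_rfl fun i hi => (hF i hi).1,
    iUnion₂_subset fun i hi τ hτ => ?_, fun σ hσ τ hτ ρ hσρ hρτ => ?_⟩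
  · obtain ⟨σ, hσ, hστ⟩ := (hF i hi).2.1 hτ
    exact ⟨σ, mem_biUnion hi hσ, hστ⟩
  · obtain ⟨i, hi, hσi⟩ := mem_iUnion₂.1 hσ
    obtain ⟨j, hj, hτj⟩ := mem_iUnion₂.1 hτ
    obtain rfl := hsep i hi j hj σ ((hF i hi).1 hσi) τ hτj (hσρ.trans hρτ)
    exact mem_biUnion hi ((hF i hi).mem_of_prefix hσi hτj hσρ hρτ)

theorem Bushy.biUnion {h : ℕ → ℕ}
    (hsep : ∀ i ∈ s, ∀ j ∈ s, ∀ x ∈ F i, ∀ y ∈ F j, x <+: y → i = j)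
    (hF : ∀ i ∈ s, Bushy h (F i)) (hfin : (⋃ i ∈ s, F i).Finite) :
    Bushy h (⋃ i ∈ s, F i) :=
  Bushy.of_cover hfin fun τ hτ hnl => by
    obtain ⟨i, hi, hτi⟩ := mem_iUnion₂.1 hτ
    exact ⟨F i, subset_biUnion_of_mem hi, hF i hi, hτi,
      fun hl => hnl ((isLeaf_biUnion_iff hsep hi hτi).2 hl)⟩

end BiUnion

section Pairs

variable {τ τ' : Str} {Q : Set Str} {T W : Set (Str × Str)}

theorem domP_finite (hT : T.Finite) : (domP T).Finite :=
  (hT.image Prod.fst).subset fun τ ⟨ρ, hρ⟩ => ⟨(τ, ρ), hρ, rfl⟩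

theorem sec_finite (hT : T.Finite) (τ : Str) : (sec T τ).Finite :=
  (hT.image Prod.snd).subset fun ρ hρ => ⟨(τ, ρ), hρ, rfl⟩

theorem domP_singleton_prod_subset : domP ({τ} ×ˢ Q) ⊆ {τ} :=
  fun _ ⟨_, h⟩ => h.1

theorem domP_singleton_prod (hQ : Q.Nonempty) : domP ({τ} ×ˢ Q) = {τ} := by
  refine domP_singleton_prod_subset.antisymm ?_
  rintro _ rfl
  obtain ⟨ρ, hρ⟩ := hQ
  exact ⟨ρ, rfl, hρ⟩

theorem sec_singleton_prod : sec ({τ} ×ˢ Q) τ = Q :=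
  ext fun _ => ⟨fun h => h.2, fun h => ⟨rfl, h⟩⟩

theorem prefixFree2_singleton_prod (hQ : PrefixFree Q) : PrefixFree2 ({τ} ×ˢ Q) := by
  refine ⟨fun σ hσ σ' hσ' _ => ?_, fun σ hσ => ?_⟩
  · rw [domP_singleton_prod_subset hσ, domP_singleton_prod_subset hσ']
  · rwa [domP_singleton_prod_subset hσ, sec_singleton_prod]

theorem IsForestSys.prefix_of_mem (hW : IsForestSys ({τ} ×ˢ Q) W) (hτ' : τ' ∈ domP W) :
    τ <+: τ' := by
  obtain ⟨σ, hσ, hστ'⟩ := hW.1.2.1 hτ'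
  rwa [domP_singleton_prod_subset hσ] at hστ'

theorem IsForestSys.root_mem (hW : IsForestSys ({τ} ×ˢ Q) W) (hQ : Q.Nonempty) :
    τ ∈ domP W :=
  hW.1.1 ((domP_singleton_prod hQ).symm ▸ rfl)

theorem IsForestSys.isForestAbove_sec (hW : IsForestSys ({τ} ×ˢ Q) W) (hτ' : τ' ∈ domP W) :
    IsForestAbove Q (sec W τ') := by
  obtain ⟨σ, hσ, hστ'⟩ := hW.1.2.1 hτ'
  obtain rfl : σ = τ := domP_singleton_prod_subset hσ
  simpa only [sec_singleton_prod] using (hW.2.1 τ' hτ').2 σ hσ hστ'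

theorem isForestSys_self {A : Set (Str × Str)} (hA : PrefixFree2 A) (hfin : A.Finite) :
    IsForestSys A A := by
  refine ⟨hA.1.isForestAbove_self, fun τ hτ => ⟨sec_finite hfin τ, fun σ hσ hστ => ?_⟩,
    fun τ hτ τ' hτ' hττ' => ?_⟩
  · obtain rfl := hA.1 σ hσ τ hτ hστ
    exact (hA.2 σ hσ).isForestAbove_self
  · rw [hA.1 τ hτ τ' hτ' hττ']
    exact EndExt.refl _

theorem bushy2_self {g h : ℕ → ℕ} {A : Set (Str × Str)} (hA : PrefixFree2 A) : Bushy2 g h A :=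
  ⟨hA.1.bushy, fun τ hτ => (hA.2 τ hτ).bushy⟩

theorem bigAboveF2_of_subset {g h : ℕ → ℕ} {A D : Set (Str × Str)} (hA : PrefixFree2 A)
    (hfin : A.Finite) (hAD : A ⊆ D) : BigAboveF2 g h A D :=
  ⟨A, hfin, isForestSys_self hA hfin, bushy2_self hA, fun _ hp => hAD hp.2.1⟩

end Pairs

/-- `S` with `W τ` grafted on at each leaf `τ` of `dom S`. -/
def concat (S : Set (Str × Str)) (W : Str → Set (Str × Str)) : Set (Str × Str) :=
  {p ∈ S | ¬ IsLeaf (domP S) p.1} ∪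
    {p | ∃ τ, IsLeaf (domP S) τ ∧ p.1 ∈ domP (W τ) ∧ p.2 ∈ sec S τ ∪ sec (W τ) p.1}

def IsGraftFamily (S : Set (Str × Str)) (L : Str → Set Str) (W : Str → Set (Str × Str)) :
    Prop :=
  ∀ τ, IsLeaf (domP S) τ →
    (L τ).Nonempty ∧ L τ ⊆ leaves (sec S τ) ∧ IsForestSys ({τ} ×ˢ L τ) (W τ)

section Concat

variable {g h : ℕ → ℕ} {A S : Set (Str × Str)} {L : Str → Set Str}
  {W : Str → Set (Str × Str)} {τ τ₁ τ' τ₂ : Str}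

theorem mem_domP_concat (hτ' : τ' ∈ domP (concat S W)) :
    (τ' ∈ domP S ∧ ¬ IsLeaf (domP S) τ') ∨ ∃ τ, IsLeaf (domP S) τ ∧ τ' ∈ domP (W τ) := by
  obtain ⟨ρ, ⟨hρ, hnl⟩ | ⟨τ, hτ, hτ', -⟩⟩ := hτ'
  · exact Or.inl ⟨⟨ρ, hρ⟩, hnl⟩
  · exact Or.inr ⟨τ, hτ, hτ'⟩

namespace IsGraftFamily

theorem prefix_of_mem (hW : IsGraftFamily S L W) (hτ : IsLeaf (domP S) τ)
    (hτ' : τ' ∈ domP (W τ)) : τ <+: τ' :=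
  (hW τ hτ).2.2.prefix_of_mem hτ'

theorem eq_of_prefix (hW : IsGraftFamily S L W) :
    ∀ τ ∈ leaves (domP S), ∀ τ₁ ∈ leaves (domP S), ∀ x ∈ domP (W τ), ∀ y ∈ domP (W τ₁),
      x <+: y → τ = τ₁ :=
  fun _ hτ _ hτ₁ _ hx _ hy hxy => (prefixFree_leaves _).eq_of_prefix hτ hτ₁
    ((hW.prefix_of_mem hτ hx).trans hxy) (hW.prefix_of_mem hτ₁ hy)

theorem isForestAbove_sec (hW : IsGraftFamily S L W) (hτ : IsLeaf (domP S) τ)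
    (hτ' : τ' ∈ domP (W τ)) : IsForestAbove (L τ) (sec (W τ) τ') :=
  (hW τ hτ).2.2.isForestAbove_sec hτ'

theorem subset_leaves (hW : IsGraftFamily S L W) (hτ : IsLeaf (domP S) τ) :
    L τ ⊆ leaves (sec S τ) :=
  (hW τ hτ).2.1

theorem eq_of_mem_domP (hW : IsGraftFamily S L W) (hτ : IsLeaf (domP S) τ)
    (hτ'S : τ' ∈ domP S) (hτ' : τ' ∈ domP (W τ)) : τ' = τ :=
  hτ.2 τ' hτ'S (hW.prefix_of_mem hτ hτ')

theorem isForestAbove_biUnion (hW : IsGraftFamily S L W) :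
    IsForestAbove (leaves (domP S)) (⋃ τ ∈ leaves (domP S), domP (W τ)) := by
  have := IsForestAbove.biUnion (s := leaves (domP S)) (A := fun τ => {τ})
    hW.eq_of_prefix
    fun τ hτ => domP_singleton_prod (hW τ hτ).1 ▸ (hW τ hτ).2.2.1
  rwa [biUnion_of_singleton] at this

theorem domP_concat (hW : IsGraftFamily S L W) :
    domP (concat S W) = domP S ∪ ⋃ τ ∈ leaves (domP S), domP (W τ) := by
  ext τ'
  constructor
  · rintro ⟨ρ, ⟨hρ, -⟩ | ⟨τ, hτ, hτ', -⟩⟩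
    · exact Or.inl ⟨ρ, hρ⟩
    · exact Or.inr (mem_biUnion hτ hτ')
  · rintro (⟨ρ, hρ⟩ | hτ')
    · by_cases hl : IsLeaf (domP S) τ'
      · exact ⟨ρ, Or.inr ⟨τ', hl, (hW τ' hl).2.2.root_mem (hW τ' hl).1, Or.inl hρ⟩⟩
      · exact ⟨ρ, Or.inl ⟨hρ, hl⟩⟩
    · obtain ⟨τ, hτ, hτ'⟩ := mem_iUnion₂.1 hτ'
      obtain ⟨ρ, hρ⟩ := hτ.1
      exact ⟨ρ, Or.inr ⟨τ, hτ, hτ', Or.inl hρ⟩⟩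

theorem sec_concat_of_not_isLeaf (hW : IsGraftFamily S L W) (hτS : τ ∈ domP S)
    (hτ : ¬ IsLeaf (domP S) τ) : sec (concat S W) τ = sec S τ := by
  ext ρ
  refine ⟨?_, fun hρ => Or.inl ⟨hρ, hτ⟩⟩
  rintro (⟨hρ, -⟩ | ⟨τ₁, hτ₁, hτW, -⟩)
  · exact hρ
  · exact absurd (hW.eq_of_mem_domP hτ₁ hτS hτW ▸ hτ₁) hτ

theorem sec_concat_of_mem (hW : IsGraftFamily S L W) (hτ : IsLeaf (domP S) τ)
    (hτ' : τ' ∈ domP (W τ)) : sec (concat S W) τ' = sec S τ ∪ sec (W τ) τ' := by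
  ext ρ
  refine ⟨?_, fun hρ => Or.inr ⟨τ, hτ, hτ', hρ⟩⟩
  rintro (⟨hρ, hnl⟩ | ⟨τ₁, hτ₁, hτ₁', hρ⟩)
  · exact absurd (hW.eq_of_mem_domP hτ ⟨ρ, hρ⟩ hτ' ▸ hτ) hnl
  · rwa [hW.eq_of_prefix τ₁ hτ₁ τ hτ τ' hτ₁' τ' hτ' List.prefix_rfl] at hρ

theorem isLeaf_domP_concat (hW : IsGraftFamily S L W) (h : IsLeaf (domP (concat S W)) τ₂) :
    ∃ τ, IsLeaf (domP S) τ ∧ IsLeaf (domP (W τ)) τ₂ := by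
  rw [hW.domP_concat, isLeaf_graft_iff hW.isForestAbove_biUnion subset_rfl] at h
  rcases h with h | ⟨hl, hnl⟩
  · obtain ⟨τ, hτ, hτ₂⟩ := mem_iUnion₂.1 h.1
    exact ⟨τ, hτ, (isLeaf_biUnion_iff hW.eq_of_prefix hτ hτ₂).1 h⟩
  · exact absurd hl hnl

theorem isLeaf2_concat (hW : IsGraftFamily S L W) {p : Str × Str} (hp : IsLeaf2 (concat S W) p) :
    ∃ τ, IsLeaf (domP S) τ ∧ IsLeaf (domP (W τ)) p.1 ∧
      (IsLeaf (sec (W τ) p.1) p.2 ∨ (IsLeaf (sec S τ) p.2 ∧ p.2 ∉ L τ)) := by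
  obtain ⟨τ, hτ, hp₁⟩ := hW.isLeaf_domP_concat hp.1
  have hp₂ := hp.2
  rw [hW.sec_concat_of_mem hτ hp₁.1,
    isLeaf_graft_iff (hW.isForestAbove_sec hτ hp₁.1) (hW.subset_leaves hτ)] at hp₂
  exact ⟨τ, hτ, hp₁, hp₂⟩

theorem isForestAbove_sec_concat (hS : IsForestSys A S) (hW : IsGraftFamily S L W)
    (hτ : IsLeaf (domP S) τ) (hτ' : τ' ∈ domP (W τ)) {σ : Str} (hσ : σ ∈ domP A)
    (hστ' : σ <+: τ') : IsForestAbove (sec A σ) (sec (concat S W) τ') := by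
  have hστ : σ <+: τ := by
    rcases List.prefix_or_prefix_of_prefix hστ' (hW.prefix_of_mem hτ hτ') with h | h
    · exact h
    · rw [hτ.2 σ (hS.1.1 hσ) h]
  rw [hW.sec_concat_of_mem hτ hτ']
  exact ((hS.2.1 τ hτ.1).2 σ hσ hστ).graft (hW.isForestAbove_sec hτ hτ')
    fun _ hρ => (hW.subset_leaves hτ hρ).1

theorem endExt_sec_concat (hS : IsForestSys A S) (hW : IsGraftFamily S L W)
    (h₁ : τ₁ ∈ domP (concat S W)) (h₂ : τ₂ ∈ domP (concat S W)) (h₁₂ : τ₁ <+: τ₂) :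
    EndExt (sec (concat S W) τ₁) (sec (concat S W) τ₂) := by
  rcases mem_domP_concat h₁ with ⟨h₁S, h₁l⟩ | ⟨τ, hτ, h₁W⟩ <;>
    rcases mem_domP_concat h₂ with ⟨h₂S, h₂l⟩ | ⟨τ₀, hτ₀, h₂W⟩
  · rw [hW.sec_concat_of_not_isLeaf h₁S h₁l, hW.sec_concat_of_not_isLeaf h₂S h₂l]
    exact hS.2.2 τ₁ h₁S τ₂ h₂S h₁₂
  · have h₁τ₀ : τ₁ <+: τ₀ := by
      rcases List.prefix_or_prefix_of_prefix h₁₂ (hW.prefix_of_mem hτ₀ h₂W) with h | h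
      · exact h
      · exact absurd (hτ₀.2 τ₁ h₁S h ▸ hτ₀) h₁l
    rw [hW.sec_concat_of_not_isLeaf h₁S h₁l, hW.sec_concat_of_mem hτ₀ h₂W]
    exact (hS.2.2 τ₁ h₁S τ₀ hτ₀.1 h₁τ₀).trans
      (EndExt.graft (hW.isForestAbove_sec hτ₀ h₂W) (hW.subset_leaves hτ₀))
  · exact absurd (hτ.2 τ₂ h₂S ((hW.prefix_of_mem hτ h₁W).trans h₁₂) ▸ hτ) h₂l
  · obtain rfl := hW.eq_of_prefix τ hτ τ₀ hτ₀ τ₁ h₁W τ₂ h₂W h₁₂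
    rw [hW.sec_concat_of_mem hτ h₁W, hW.sec_concat_of_mem hτ h₂W]
    exact ((hW τ hτ).2.2.2.2 τ₁ h₁W τ₂ h₂W h₁₂).union_left fun ℓ hℓ =>
      (isLeaf_graft_iff (hW.isForestAbove_sec hτ h₁W) (hW.subset_leaves hτ)).2 (Or.inl hℓ)

theorem isForestSys_concat (hS : IsForestSys A S) (hW : IsGraftFamily S L W) :
    IsForestSys A (concat S W) := by
  refine ⟨?_, fun τ' hτ' => ?_, fun τ₁ h₁ τ₂ h₂ h₁₂ => endExt_sec_concat hS hW h₁ h₂ h₁₂⟩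
  · rw [hW.domP_concat]
    exact hS.1.graft hW.isForestAbove_biUnion fun _ hτ => hτ.1
  · rcases mem_domP_concat hτ' with ⟨hτ'S, hl⟩ | ⟨τ, hτ, hτ'W⟩
    · rw [hW.sec_concat_of_not_isLeaf hτ'S hl]
      exact hS.2.1 τ' hτ'S
    · refine ⟨?_, fun σ hσ hστ' => isForestAbove_sec_concat hS hW hτ hτ'W hσ hστ'⟩
      rw [hW.sec_concat_of_mem hτ hτ'W]
      exact (hS.2.1 τ hτ.1).1.union ((hW τ hτ).2.2.2.1 τ' hτ'W).1

theorem bushy2_concat (hSb : Bushy2 g h S) (hW : IsGraftFamily S L W)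
    (hWb : ∀ τ, IsLeaf (domP S) τ → Bushy2 g h (W τ)) (hfin : (concat S W).Finite) :
    Bushy2 g h (concat S W) := by
  have hdomfin := domP_finite hfin
  rw [hW.domP_concat] at hdomfin
  refine ⟨?_, fun τ' hτ' => ?_⟩
  · rw [hW.domP_concat]
    exact hSb.1.graft (Bushy.biUnion hW.eq_of_prefix (fun τ hτ => (hWb τ hτ).1)
      (hdomfin.subset subset_union_right)) hW.isForestAbove_biUnion subset_rfl hdomfin
  · have hsecfin := sec_finite hfin τ'
    rcases mem_domP_concat hτ' with ⟨hτ'S, hl⟩ | ⟨τ, hτ, hτ'W⟩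
    · rw [hW.sec_concat_of_not_isLeaf hτ'S hl]
      exact hSb.2 τ' hτ'S
    · rw [hW.sec_concat_of_mem hτ hτ'W] at hsecfin ⊢
      exact (hSb.2 τ hτ.1).graft ((hWb τ hτ).2 τ' hτ'W) (hW.isForestAbove_sec hτ hτ'W)
        (hW.subset_leaves hτ) hsecfin

end IsGraftFamily

theorem concat_finite (hSfin : S.Finite) (hWfin : ∀ τ, IsLeaf (domP S) τ → (W τ).Finite) :
    (concat S W).Finite := by
  refine (hSfin.union (((domP_finite hSfin).subset fun _ h => h.1).biUnion fun τ hτ =>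
    ((domP_finite (hWfin τ hτ)).prod (sec_finite hSfin τ)).union (hWfin τ hτ))).subset ?_
  rintro ⟨τ', ρ⟩ (⟨hρ, -⟩ | ⟨τ, hτ, hτ', hρ | hρ⟩)
  · exact Or.inl hρ
  · exact Or.inr (mem_biUnion (t := fun τ => domP (W τ) ×ˢ sec S τ ∪ W τ) hτ (Or.inl ⟨hτ', hρ⟩))
  · exact Or.inr (mem_biUnion (t := fun τ => domP (W τ) ×ˢ sec S τ ∪ W τ) hτ (Or.inr hρ))

theorem bigAboveF2_of_concat {D : Set (Str × Str)} (hSfin : S.Finite) (hS : IsForestSys A S)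
    (hSb : Bushy2 g h S)
    (hL : ∀ τ, IsLeaf (domP S) τ → (L τ).Nonempty ∧ L τ ⊆ leaves (sec S τ))
    (hW : ∀ τ, IsLeaf (domP S) τ → BigAboveF2 g h ({τ} ×ˢ L τ) D)
    (hD : ∀ τ, IsLeaf (domP S) τ → ∀ ρ, IsLeaf (sec S τ) ρ → ρ ∉ L τ →
      ∀ τ', τ <+: τ' → (τ', ρ) ∈ D) :
    BigAboveF2 g h A D := by
  choose! W hWfin hWsys hWb hWD using hW
  have hgraft : IsGraftFamily S L W := fun τ hτ => ⟨(hL τ hτ).1, (hL τ hτ).2, hWsys τ hτ⟩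
  have hfin := concat_finite hSfin hWfin
  refine ⟨concat S W, hfin, hgraft.isForestSys_concat hS, hgraft.bushy2_concat hSb hWb hfin,
    fun p hp => ?_⟩
  obtain ⟨τ, hτ, hp₁, hpW | ⟨hpS, hpL⟩⟩ := hgraft.isLeaf2_concat hp
  · exact hWD τ hτ p ⟨hp₁, hpW⟩
  · exact hD τ hτ p.2 hpS hpL p.1 (hgraft.prefix_of_mem hτ hp₁.1)

end Concat

/-- `R` is `S` with the elements of `P` other than `ρ₀` added to every section. -/
theorem exists_pad {g h : ℕ → ℕ} {S : Set (Str × Str)} {τ ρ₀ : Str} {P : Set Str}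
    (hSfin : S.Finite) (hS : IsForestSys {(τ, ρ₀)} S) (hSb : Bushy2 g h S)
    (hPfin : P.Finite) (hP : PrefixFree P) (hρ₀ : ρ₀ ∈ P) :
    ∃ R : Set (Str × Str), R.Finite ∧ IsForestSys ({τ} ×ˢ P) R ∧ Bushy2 g h R ∧
      ∀ τ₂, IsLeaf (domP R) τ₂ → IsLeaf (domP S) τ₂ ∧
        ∀ ρ, IsLeaf (sec R τ₂) ρ ↔ IsLeaf (sec S τ₂) ρ ∨ (ρ ∈ P ∧ ρ ≠ ρ₀) := by
  have hZ : PrefixFree2 ({τ} ×ˢ P) := prefixFree2_singleton_prod hP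
  have hZfin : ({τ} ×ˢ P).Finite := (finite_singleton τ).prod hPfin
  have hleafZ : ∀ τ', IsLeaf (domP ({τ} ×ˢ P)) τ' → τ' = τ :=
    fun _ hτ' => domP_singleton_prod_subset hτ'.1
  have hgraft : IsGraftFamily ({τ} ×ˢ P) (fun _ => {ρ₀}) (fun _ => S) := by
    intro τ' hτ'
    obtain rfl := hleafZ τ' hτ'
    refine ⟨singleton_nonempty ρ₀, ?_, by rwa [singleton_prod_singleton]⟩
    rintro _ rfl
    show IsLeaf _ _
    rw [sec_singleton_prod]
    exact hP.isLeaf hρ₀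
  have hfin := concat_finite hZfin fun _ _ => hSfin
  refine ⟨_, hfin, hgraft.isForestSys_concat (isForestSys_self hZ hZfin),
    hgraft.bushy2_concat (bushy2_self hZ) (fun _ _ => hSb) hfin, fun τ₂ hτ₂ => ?_⟩
  obtain ⟨τ', hτ', hτ₂S⟩ := hgraft.isLeaf_domP_concat hτ₂
  obtain rfl := hleafZ τ' hτ'
  refine ⟨hτ₂S, fun ρ => ?_⟩
  rw [hgraft.sec_concat_of_mem hτ' hτ₂S.1, isLeaf_graft_iff (hgraft.isForestAbove_sec hτ' hτ₂S.1)
    (hgraft.subset_leaves hτ'), sec_singleton_prod, hP.isLeaf_iff, mem_singleton_iff]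

theorem bigAboveF2_singleton_prod {g h : ℕ → ℕ} {C : Set (Str × Str)} (hC : Open2 C)
    {P : Set Str} (hPfin : P.Finite) (τ : Str) (hP : PrefixFree P)
    (hbig : ∀ ρ ∈ P, ∀ τ', τ <+: τ' → BigAboveF2 g h {(τ', ρ)} C) :
    BigAboveF2 g h ({τ} ×ˢ P) C := by
  induction P, hPfin using Set.Finite.induction_on generalizing τ with
  | empty => exact bigAboveF2_of_subset (prefixFree2_singleton_prod hP) (by simp) (by simp)
  | @insert ρ₀ P hρ₀ hPfin ih =>
    obtain ⟨S, hSfin, hS, hSb, hSC⟩ := hbig ρ₀ (mem_insert _ _) τ List.prefix_rfl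
    rcases P.eq_empty_or_nonempty with rfl | hPne
    · rw [insert_empty_eq, singleton_prod_singleton]
      exact ⟨S, hSfin, hS, hSb, hSC⟩
    obtain ⟨R, hRfin, hR, hRb, hRleaf⟩ :=
      exists_pad hSfin hS hSb (hPfin.insert ρ₀) hP (mem_insert _ _)
    refine bigAboveF2_of_concat (L := fun _ => P) hRfin hR hRb
      (fun τ₂ hτ₂ => ⟨hPne, fun ρ hρ => ((hRleaf τ₂ hτ₂).2 ρ).2
        (Or.inr ⟨mem_insert_of_mem _ hρ, ne_of_mem_of_not_mem hρ hρ₀⟩)⟩)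
      (fun τ₂ hτ₂ => ih τ₂ (hP.mono (subset_insert _ _)) fun ρ hρ τ₃ hτ₃ =>
        hbig ρ (mem_insert_of_mem _ hρ) τ₃ ((hR.prefix_of_mem hτ₂.1).trans hτ₃))
      fun τ₂ hτ₂ ρ hρ hρP τ₃ hτ₃ => ?_
    rcases ((hRleaf τ₂ hτ₂).2 ρ).1 hρ with hρS | ⟨hρP', hρρ₀⟩
    · exact hC _ (hSC (τ₂, ρ) ⟨(hRleaf τ₂ hτ₂).1, hρS⟩) (τ₃, ρ) hτ₃ List.prefix_rfl
    · exact absurd (hρP'.resolve_left hρρ₀) hρP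

theorem weak_concatenation_pairs_general (g h : ℕ → ℕ)
    (A B C : Set (Str × Str)) (hCopen : Open2 C)
    (hB : BigAbove2 g h A B)
    (hC : ∀ p ∈ B, ∀ τ' : Str, p.1 <+: τ' → BigAboveF2 g h {(τ', p.2)} C) :
    BigAbove2 g h A C := by
  intro A' hA'A hA'fin hA'
  obtain ⟨T, hTfin, hT, hTb, hTB⟩ := hB A' hA'A hA'fin hA'
  refine bigAboveF2_of_concat (L := fun τ => leaves (sec T τ)) hTfin hT hTb
    (fun τ hτ => ⟨?_, subset_rfl⟩) (fun τ hτ => ?_) fun _ _ ρ hρ hρL => absurd hρ hρL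
  · obtain ⟨ρ, hρ⟩ := hτ.1
    obtain ⟨ℓ, hℓ, -⟩ := (sec_finite hTfin τ).exists_isLeaf_prefix hρ
    exact ⟨ℓ, hℓ⟩
  · exact bigAboveF2_singleton_prod hCopen ((sec_finite hTfin τ).subset fun _ hρ => hρ.1) τ
      (prefixFree_leaves _) fun ρ hρ τ' hττ' => hC (τ, ρ) (hTB (τ, ρ) ⟨hτ, hρ⟩) τ' hττ'

/-- Weak concatenation property for pairs: if `B` is `(g, h)`-big above `A`,
`C` is open, and for every `(τ, ρ) ∈ B` and every `τ'` extending `τ` the set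
`C` is `(g, h)`-big above `(τ', ρ)`, then `C` is `(g, h)`-big above `A`. -/
theorem weak_concatenation_pairs (g h : ℕ → ℕ) (hg : Bounding g) (hh : Bounding h)
    (A B C : Set (Str × Str)) (hCopen : Open2 C)
    (hB : BigAbove2 g h A B)
    (hC : ∀ p ∈ B, ∀ τ' : Str, p.1 <+: τ' → BigAboveF2 g h {(τ', p.2)} C) :
    BigAbove2 g h A C :=
  weak_concatenation_pairs_general g h A B C hCopen hB hC
end
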